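/- arXiv:1811.03710 — 5 statements merged into one kernel-verified Lean document; each statement's English description precedes it below -/
import Mathlib

section
/- Under the breadth-first delegation rule, if a delegating voter k is assigned her guru through a delegation chain C_k that contains another delegating voter j, then k is assigned the same guru as j. -/
/-- A delegation graph: voters are partitioned into casting, delegating and
abstaining (neither) voters; `weight a b = some x` iff delegating voter `a`
ranks `b` at position `x`. -/
structure DelGraph (V : Type) where
  cast : V → Prop
  deleg : V → Prop
  weight : V → V → Option ℕ

namespace DelGraph

variable {V : Type}

/-- Edge of the delegation graph. -/
def Edge (G : DelGraph V) (a b : V) : Prop := G.weight a b ≠ none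

/-- The weight sequence of a chain. -/
def weights (G : DelGraph V) (c : List V) : List ℕ :=
  (c.zip c.tail).map fun p => (G.weight p.1 p.2).getD 0

/-- A delegation chain for `i` : a repetition-free directed path starting at
the delegating voter `i` and ending at a casting voter. -/
def IsChain (G : DelGraph V) (i : V) (c : List V) : Prop :=
  c.head? = some i ∧ G.deleg i ∧ c.Nodup ∧ List.Chain' G.Edge c ∧
    ∃ j, c.getLast? = some j ∧ G.cast j

/-- Lexicographic (strict) order on weight sequences. -/
def LexLt (u v : List ℕ) : Prop := List.Lex (· < ·) u v

/-- Depth-first delegation: the selected chain has lexicographically minimal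
weight sequence. -/
def DFSelect (G : DelGraph V) (i : V) (c : List V) : Prop :=
  G.IsChain i c ∧ ∀ c', G.IsChain i c' → ¬ LexLt (G.weights c') (G.weights c)

/-- `j` is the guru assigned to `i` by the depth-first delegation rule. -/
def DFGuru (G : DelGraph V) (i j : V) : Prop :=
  ∃ c, G.DFSelect i c ∧ c.getLast? = some j

/-- Breadth-first comparison: shorter length first, lexicographically smaller
weight sequence among equal-length chains. -/
def BFLt (G : DelGraph V) (c' c : List V) : Prop :=
  c'.length < c.length ∨
    (c'.length = c.length ∧ LexLt (G.weights c') (G.weights c))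

/-- Breadth-first delegation: the selected chain is minimal for `BFLt`. -/
def BFSelect (G : DelGraph V) (i : V) (c : List V) : Prop :=
  G.IsChain i c ∧ ∀ c', G.IsChain i c' → ¬ G.BFLt c' c

/-- `j` is the guru assigned to `i` by the breadth-first delegation rule. -/
def BFGuru (G : DelGraph V) (i j : V) : Prop :=
  ∃ c, G.BFSelect i c ∧ c.getLast? = some j

/-- The delegation graph has no directed cycle. -/
def Acyclic (G : DelGraph V) : Prop :=
  ∀ v, ¬ Relation.TransGen G.Edge v v

/-- `G'` is obtained from `G` when the previously abstaining voter `j` joins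
the delegating electorate (adding `j`'s outgoing edges). -/
def Joins (G G' : DelGraph V) (j : V) : Prop :=
  ¬ G.deleg j ∧ ¬ G.cast j ∧ (∀ b, G.weight j b = none) ∧
    (∀ v, G'.cast v ↔ G.cast v) ∧ (∀ v, G'.deleg v ↔ G.deleg v ∨ v = j) ∧
    (∀ a b, a ≠ j → G'.weight a b = G.weight a b)

/-- `G'` is obtained from `G` by removing the delegating voter `j` (she now
abstains): node `j` and all incident edges are deleted. -/
def Removes (G G' : DelGraph V) (j : V) : Prop :=
  (∀ v, G'.cast v ↔ G.cast v) ∧ (∀ v, G'.deleg v ↔ G.deleg v ∧ v ≠ j) ∧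
    (∀ a b, (a = j ∨ b = j) → G'.weight a b = none) ∧
    (∀ a b, a ≠ j → b ≠ j → G'.weight a b = G.weight a b)

end DelGraph

/-!
Let `k`'s selected chain be `p ++ j :: s`. If `j` had a chain `c` beating `j :: s` in the
breadth-first order, splice it into `k`'s chain. When `c` avoids `p`, the chain `p ++ c` for `k`
beats `p ++ j :: s`, since both share the prefix `p` and `c` is no longer than `j :: s`. Otherwise
cut at the first vertex `v` of `p` that `c` visits and continue along `c` from `v`: as `c` is no
longer than `j :: s`, this chain for `k` is strictly shorter. Both contradict the minimality of
`k`'s chain, so `j :: s` is selected for `j`, and it ends at `k`'s guru.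
-/

theorem List.exists_eq_append_cons_of_not_disjoint {α : Type*} {p c : List α}
    (h : ¬ p.Disjoint c) : ∃ p₁ v p₂, p = p₁ ++ v :: p₂ ∧ v ∈ c ∧ p₁.Disjoint c := by
  classical
  obtain ⟨v, hvp, hvc⟩ : ∃ v ∈ p, v ∈ c := by
    simpa [List.disjoint_left] using h
  have hfind : (p.find? fun x => decide (x ∈ c)).isSome :=
    List.find?_isSome.2 ⟨v, hvp, decide_eq_true hvc⟩
  obtain ⟨w, hw⟩ := Option.isSome_iff_exists.1 hfind
  obtain ⟨hwc, p₁, p₂, rfl, hp₁⟩ := List.find?_eq_some_iff_append.1 hw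
  exact ⟨p₁, w, p₂, rfl, of_decide_eq_true hwc, fun a ha hac => by simpa [hac] using hp₁ a ha⟩

namespace DelGraph

variable {V : Type} {G : DelGraph V}

def IsCastPath (G : DelGraph V) (c : List V) : Prop :=
  c.Nodup ∧ List.IsChain G.Edge c ∧ ∃ j, c.getLast? = some j ∧ G.cast j

theorem IsCastPath.of_append_cons {p s : List V} {v : V} (h : G.IsCastPath (p ++ v :: s)) :
    G.IsCastPath (v :: s) := by
  obtain ⟨hnd, hch, m, hm, hcast⟩ := h
  exact ⟨(List.nodup_append.1 hnd).2.1, (List.isChain_append.1 hch).2.1, m,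
    by rwa [List.getLast?_append_cons] at hm, hcast⟩

theorem IsCastPath.splice {p s t : List V} {v : V} (h : G.IsCastPath (p ++ v :: s))
    (ht : G.IsCastPath (v :: t)) (hd : p.Disjoint (v :: t)) : G.IsCastPath (p ++ v :: t) := by
  obtain ⟨hnd, hch, -⟩ := h
  obtain ⟨hndt, hcht, m, hm, hcast⟩ := ht
  refine ⟨List.nodup_append'.2 ⟨(List.nodup_append.1 hnd).1, hndt, hd⟩, ?_, m,
    by rwa [List.getLast?_append_cons], hcast⟩
  obtain ⟨hchp, -, hjoin⟩ := List.isChain_append.1 hch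
  exact List.isChain_append.2 ⟨hchp, hcht, hjoin⟩

theorem IsChain.eq_cons {i : V} {c : List V} (h : G.IsChain i c) : ∃ t, c = i :: t :=
  List.head?_eq_some_iff.1 h.1

theorem IsChain.suffix {i j : V} {p s : List V} (h : G.IsChain i (p ++ j :: s))
    (hj : G.deleg j) : G.IsChain j (j :: s) :=
  ⟨rfl, hj, IsCastPath.of_append_cons h.2.2⟩

theorem IsChain.splice {i v : V} {p s t : List V} (h : G.IsChain i (p ++ v :: s))
    (ht : G.IsCastPath (v :: t)) (hd : p.Disjoint (v :: t)) : G.IsChain i (p ++ v :: t) := by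
  refine ⟨?_, h.2.1, IsCastPath.splice h.2.2 ht hd⟩
  rw [← h.1, List.head?_append, List.head?_append]
  rfl

variable (G) in
theorem weights_append_cons : ∀ (p : List V) (v : V) (s : List V),
    G.weights (p ++ v :: s) = G.weights (p ++ [v]) ++ G.weights (v :: s)
  | [], _, _ => by simp [weights]
  | [_], _, _ => by simp [weights]
  | x :: y :: p, v, s => by
    have := weights_append_cons (y :: p) v s
    simp only [List.cons_append, weights, List.tail_cons, List.zip_cons_cons,
      List.map_cons] at this ⊢
    rw [this]

theorem BFLt.length_le {c c' : List V} (h : G.BFLt c' c) : c'.length ≤ c.length := by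
  rcases h with h | ⟨h, -⟩ <;> omega

theorem BFLt.append_left {v : V} {s t : List V} (h : G.BFLt (v :: t) (v :: s)) (p : List V) :
    G.BFLt (p ++ v :: t) (p ++ v :: s) := by
  rcases h with h | ⟨h, hlex⟩
  · exact Or.inl (by simp only [List.length_append, List.length_cons] at h ⊢; omega)
  · refine Or.inr ⟨by simp only [List.length_append, List.length_cons] at h ⊢; omega, ?_⟩
    rw [weights_append_cons G p v t, weights_append_cons G p v s]
    exact hlex.append_left _ _

theorem IsChain.exists_bfLt_of_suffix {i j : V} {p s c : List V}
    (h : G.IsChain i (p ++ j :: s)) (hc : G.IsChain j c) (hlt : G.BFLt c (j :: s)) :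
    ∃ c', G.IsChain i c' ∧ G.BFLt c' (p ++ j :: s) := by
  obtain ⟨u, rfl⟩ := hc.eq_cons
  by_cases hd : p.Disjoint (j :: u)
  · exact ⟨_, h.splice hc.2.2 hd, hlt.append_left p⟩
  obtain ⟨p₁, v, p₂, rfl, hv, hp₁⟩ := List.exists_eq_append_cons_of_not_disjoint hd
  obtain ⟨q₁, q₂, hq⟩ := List.append_of_mem hv
  have hlen := congrArg List.length hq
  have hu := hlt.length_le
  simp only [List.length_append, List.length_cons] at hlen hu
  rw [List.append_assoc, List.cons_append] at h
  have hpath : G.IsCastPath (v :: q₂) := IsCastPath.of_append_cons (p := q₁) (hq ▸ hc.2.2)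
  have hsub : v :: q₂ ⊆ j :: u := hq ▸ List.subset_append_right _ _
  refine ⟨p₁ ++ v :: q₂, h.splice hpath (List.disjoint_of_subset_right hsub hp₁), Or.inl ?_⟩
  simp only [List.length_append, List.length_cons]
  omega

theorem BFSelect.suffix {i j : V} {p s : List V} (h : G.BFSelect i (p ++ j :: s))
    (hj : G.deleg j) : G.BFSelect j (j :: s) := by
  refine ⟨h.1.suffix hj, fun c hc hlt => ?_⟩
  obtain ⟨c', hc', hlt'⟩ := h.1.exists_bfLt_of_suffix hc hlt
  exact h.2 c' hc' hlt'

end DelGraph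

/-- under breadth-first delegation, if `k` is assigned her guru
through a chain containing the delegating voter `j`, then `k` is assigned the
same guru as `j`. -/
theorem stmt2 {V : Type} (G : DelGraph V) (k j l : V) (c : List V)
    (hsel : G.BFSelect k c) (hlast : c.getLast? = some l)
    (hj : j ∈ c) (hjd : G.deleg j) :
    G.BFGuru j l := by
  obtain ⟨pre, rest, rfl⟩ := List.append_of_mem hj
  exact ⟨j :: rest, hsel.suffix hjd, by rwa [List.getLast?_append_cons] at hlast⟩
end

section
/- Under the breadth-first delegation rule, if a delegating voter k is assigned guru l through a delegation chain that does not contain voter j, then k is still assigned guru l in the election in which j abstains (i.e., after removing j and all edges incident to j from the delegation graph). -/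
/-!
Once `j` abstains it has no incident edges and is not delegating, so no delegation chain of the
new graph passes through `j`; conversely a chain avoiding `j` keeps its edges and weights. Hence
the chains for `k` after the removal are exactly the old chains avoiding `j`, ordered as before,
and the old breadth-first choice, which avoids `j`, remains minimal.
-/

theorem List.eq_singleton_of_isChain_of_mem {α : Type*} {R : α → α → Prop} {l : List α} {x : α}
    (hl : l.IsChain R) (hx : x ∈ l) (hR : ∀ a b, R a b → a ≠ x ∧ b ≠ x) : l = [x] := by
  induction hl with
  | nil => cases hx
  | singleton a => simp_all
  | cons_cons hab _ ih =>
    rcases List.mem_cons.mp hx with rfl | hx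
    · exact absurd rfl (hR _ _ hab).1
    · cases (hR _ _ hab).2 (List.head_eq_of_cons_eq (ih hx))

namespace DelGraph

namespace Removes

variable {V : Type} {G G' : DelGraph V} {j : V}

theorem ne_of_edge (h : G.Removes G' j) {a b : V} (hab : G'.Edge a b) : a ≠ j ∧ b ≠ j := by
  obtain ⟨-, -, hnone, -⟩ := h
  constructor <;> rintro rfl
  exacts [hab (hnone _ _ (Or.inl rfl)), hab (hnone _ _ (Or.inr rfl))]

theorem edge_iff (h : G.Removes G' j) {a b : V} (ha : a ≠ j) (hb : b ≠ j) :
    G'.Edge a b ↔ G.Edge a b := by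
  rw [Edge, Edge, h.2.2.2 a b ha hb]

theorem weights_eq (h : G.Removes G' j) {d : List V} (hd : j ∉ d) :
    G'.weights d = G.weights d := by
  refine List.map_congr_left fun p hp => ?_
  obtain ⟨h₁, h₂⟩ := List.of_mem_zip hp
  rw [h.2.2.2 _ _ (ne_of_mem_of_not_mem h₁ hd)
    (ne_of_mem_of_not_mem (List.mem_of_mem_tail h₂) hd)]

theorem isChain_edge_iff (h : G.Removes G' j) {d : List V} (hd : j ∉ d) :
    d.IsChain G'.Edge ↔ d.IsChain G.Edge :=
  List.IsChain.iff_of_mem_imp fun _ _ ha hb =>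
    h.edge_iff (ne_of_mem_of_not_mem ha hd) (ne_of_mem_of_not_mem hb hd)

theorem not_mem_of_isChain (h : G.Removes G' j) {k : V} {d : List V} (hd : G'.IsChain k d) :
    j ∉ d := by
  intro hj
  obtain ⟨hhead, hdeleg, -, hchain, -⟩ := hd
  have : d = [j] := List.eq_singleton_of_isChain_of_mem hchain hj fun _ _ => h.ne_of_edge
  simp only [this, List.head?_cons, Option.some.injEq] at hhead
  exact ((h.2.1 k).mp hdeleg).2 hhead.symm

theorem isChain_iff (h : G.Removes G' j) {k : V} {d : List V} :
    G'.IsChain k d ↔ G.IsChain k d ∧ j ∉ d := by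
  refine ⟨fun hd => ?_, fun ⟨hd, hj⟩ => ?_⟩
  · have hj := h.not_mem_of_isChain hd
    obtain ⟨hhead, hdeleg, hnodup, hchain, m, hm, hcast⟩ := hd
    exact ⟨⟨hhead, ((h.2.1 k).mp hdeleg).1, hnodup, (h.isChain_edge_iff hj).mp hchain,
      m, hm, (h.1 m).mp hcast⟩, hj⟩
  · obtain ⟨hhead, hdeleg, hnodup, hchain, m, hm, hcast⟩ := hd
    have hk : k ≠ j := ne_of_mem_of_not_mem (List.mem_of_mem_head? hhead) hj
    exact ⟨hhead, (h.2.1 k).mpr ⟨hdeleg, hk⟩, hnodup, (h.isChain_edge_iff hj).mpr hchain,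
      m, hm, (h.1 m).mpr hcast⟩

theorem bfLt_iff (h : G.Removes G' j) {c c' : List V} (hc : j ∉ c) (hc' : j ∉ c') :
    G'.BFLt c' c ↔ G.BFLt c' c := by
  rw [BFLt, BFLt, h.weights_eq hc, h.weights_eq hc']

theorem bfSelect (h : G.Removes G' j) {k : V} {c : List V} (hsel : G.BFSelect k c)
    (hj : j ∉ c) : G'.BFSelect k c := by
  refine ⟨h.isChain_iff.mpr ⟨hsel.1, hj⟩, fun c' hc' hlt => ?_⟩
  obtain ⟨hc', hj'⟩ := h.isChain_iff.mp hc'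
  exact hsel.2 c' hc' ((h.bfLt_iff hj hj').mp hlt)

end Removes

end DelGraph

theorem stmt3_general {V : Type} (G G' : DelGraph V) (j k l : V) (c : List V)
    (hrem : DelGraph.Removes G G' j)
    (hsel : G.BFSelect k c) (hlast : c.getLast? = some l)
    (hj : j ∉ c) :
    G'.BFGuru k l :=
  ⟨c, hrem.bfSelect hsel hj, hlast⟩

/-- under breadth-first delegation, if `k` is assigned guru `l`
through a chain not containing `j`, then `k` is still assigned guru `l` after
`j` abstains (i.e. `j` and all incident edges are removed). -/
theorem stmt3 {V : Type} (G G' : DelGraph V) (j k l : V) (c : List V)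
    (hrem : DelGraph.Removes G G' j)
    (hsel : G.BFSelect k c) (hlast : c.getLast? = some l)
    (hj : j ∉ c) (hkj : k ≠ j) :
    G'.BFGuru k l :=
  stmt3_general G G' j k l c hrem hsel hlast hj
end

section
/- There exists a delegation graph with a cycle, a two-alternative election, and a majority (plurality) voting rule satisfying cast participation, such that under the depth-first delegation rule a casting voter s becomes strictly worse off when an abstaining voter t joins the delegating electorate and is assigned s as her guru; hence the depth-first delegation rule does not guarantee guru participation. -/
/- Concrete delegation graph of Figure 1 on voters
   p = 0, q = 1, r = 2, s = 3, t = 4 :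
   p ranks q first, r second; q ranks t first, s second;
   t ranks p first, r second; r and s cast votes. -/

def w5 (a b : Fin 5) : Option ℕ :=
  match a.val, b.val with
  | 0, 1 => some 1
  | 0, 2 => some 2
  | 1, 4 => some 1
  | 1, 3 => some 2
  | 4, 0 => some 1
  | 4, 2 => some 2
  | _, _ => none

/-- Figure 1(b): `p, q, t` delegate, `r, s` cast. -/
def Gb : DelGraph (Fin 5) :=
  ⟨fun v => v.val = 2 ∨ v.val = 3, fun v => v.val = 0 ∨ v.val = 1 ∨ v.val = 4, w5⟩

/-- Figure 1(a): `p, q` delegate, `r, s` cast, `t` abstains. -/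
def Ga : DelGraph (Fin 5) :=
  ⟨fun v => v.val = 2 ∨ v.val = 3, fun v => v.val = 0 ∨ v.val = 1,
    fun a b => if a.val = 4 then none else w5 a b⟩

open scoped Classical in
/-- The voting weight of casting voter `c` (1 for herself plus the voters
delegating to her) under the depth-first delegation rule. -/
noncomputable def dfTally (G : DelGraph (Fin 5)) (c : Fin 5) : ℕ :=
  (if G.cast c then 1 else 0) + Nat.card {k : Fin 5 // G.DFGuru k c}

open scoped Classical in
/-- The voting weight of casting voter `c` under breadth-first delegation. -/
noncomputable def bfTally (G : DelGraph (Fin 5)) (c : Fin 5) : ℕ :=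
  (if G.cast c then 1 else 0) + Nat.card {k : Fin 5 // G.BFGuru k c}


section NodupLists

variable {α : Type*} [DecidableEq α]

def nodupListsOfLength (s : List α) : ℕ → List (List α)
  | 0 => [[]]
  | n + 1 => (nodupListsOfLength s n).flatMap fun l => (s.filter (· ∉ l)).map (· :: l)

def nodupLists (s : List α) : List (List α) :=
  (List.range (s.length + 1)).flatMap (nodupListsOfLength s)

theorem mem_nodupListsOfLength {s l : List α} (hl : l.Nodup) (hls : l ⊆ s) :
    l ∈ nodupListsOfLength s l.length := by
  induction l with
  | nil => simp [nodupListsOfLength]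
  | cons a l ih =>
    obtain ⟨hal, hl⟩ := List.nodup_cons.1 hl
    obtain ⟨has, hls⟩ := List.cons_subset.1 hls
    exact List.mem_flatMap.2 ⟨l, ih hl hls,
      List.mem_map.2 ⟨a, List.mem_filter.2 ⟨has, by simpa using hal⟩, rfl⟩⟩

theorem mem_nodupLists {s l : List α} (hl : l.Nodup) (hls : l ⊆ s) : l ∈ nodupLists s :=
  List.mem_flatMap.2 ⟨l.length,
    List.mem_range.2 (Nat.lt_succ_of_le (hl.subperm hls).length_le), mem_nodupListsOfLength hl hls⟩

end NodupLists

namespace DelGraph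

variable {V : Type} (G : DelGraph V)

instance : DecidableRel G.Edge := fun a b => inferInstanceAs (Decidable (G.weight a b ≠ none))

instance : DecidableRel LexLt := List.Lex.decidableRel (· < ·)

instance [DecidableEq V] [DecidablePred G.cast] [DecidablePred G.deleg] (i : V) :
    DecidablePred (G.IsChain i) := fun c =>
  decidable_of_iff (c.head? = some i ∧ G.deleg i ∧ c.Nodup ∧ c.IsChain G.Edge ∧
    ∃ j ∈ c.getLast?, G.cast j) Iff.rfl

theorem dfGuru_iff_exists_mem_nodupLists [DecidableEq V] {s : List V} (hs : ∀ v, v ∈ s)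
    {i j : V} :
    G.DFGuru i j ↔ ∃ c ∈ nodupLists s, G.IsChain i c ∧
      (∀ c' ∈ nodupLists s, G.IsChain i c' → ¬ LexLt (G.weights c') (G.weights c)) ∧
      c.getLast? = some j := by
  have mem {c : List V} (hc : G.IsChain i c) : c ∈ nodupLists s :=
    mem_nodupLists hc.2.2.1 fun v _ => hs v
  constructor
  · rintro ⟨c, ⟨hc, hmin⟩, hlast⟩
    exact ⟨c, mem hc, hc, fun c' _ => hmin c', hlast⟩
  · rintro ⟨c, -, hc, hmin, hlast⟩
    exact ⟨c, ⟨hc, fun c' hc' => hmin c' (mem hc') hc'⟩, hlast⟩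

instance {n : ℕ} (G : DelGraph (Fin n)) [DecidablePred G.cast] [DecidablePred G.deleg]
    (i j : Fin n) : Decidable (G.DFGuru i j) :=
  decidable_of_iff _ (G.dfGuru_iff_exists_mem_nodupLists List.mem_finRange).symm

end DelGraph

theorem dfTally_eq (G : DelGraph (Fin 5)) [DecidablePred G.cast] [DecidablePred G.deleg]
    (c : Fin 5) :
    dfTally G c = (if G.cast c then 1 else 0) + (Finset.univ.filter (G.DFGuru · c)).card := by
  classical
  rw [dfTally, Nat.card_eq_fintype_card, Fintype.card_subtype]
  congr

instance : DecidablePred Ga.cast := fun v => inferInstanceAs (Decidable (v.val = 2 ∨ v.val = 3))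
instance : DecidablePred Gb.cast := fun v => inferInstanceAs (Decidable (v.val = 2 ∨ v.val = 3))
instance : DecidablePred Ga.deleg := fun v => inferInstanceAs (Decidable (v.val = 0 ∨ v.val = 1))
instance : DecidablePred Gb.deleg :=
  fun v => inferInstanceAs (Decidable (v.val = 0 ∨ v.val = 1 ∨ v.val = 4))

set_option maxRecDepth 100000 in
/-- in the concrete election of Figure 1 (graph with a cycle),
under depth-first delegation the casting voter `s = 3` (who votes No, while
`r = 2` votes Yes) becomes strictly worse off when the abstaining voter
`t = 4` joins the delegating electorate and is assigned `s` as her guru: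
with `t` abstaining No wins the majority vote; with `t` delegating Yes wins.
Hence depth-first delegation does not guarantee guru participation. -/
theorem stmt5 :
    DelGraph.Joins Ga Gb (4 : Fin 5) ∧
    Relation.TransGen Gb.Edge (0 : Fin 5) 0 ∧
    Gb.DFGuru (4 : Fin 5) 3 ∧
    dfTally Ga 3 > dfTally Ga 2 ∧
    dfTally Gb 2 > dfTally Gb 3 := by
  have cycle : Relation.TransGen Gb.Edge 0 0 :=
    .head (b := 1) (by decide) (.head (b := 4) (by decide) (.single (by decide)))
  refine ⟨?_, cycle, by decide, ?_, ?_⟩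
  · unfold DelGraph.Joins
    decide
  all_goals
    simp only [dfTally_eq]
    decide
end

section
/- There exists a preference profile over voters and over alternatives such that the depth-first delegation rule and the breadth-first delegation rule assign different gurus to some delegating voter, and the resulting plurality winners of the election differ; hence the election outcome depends on the choice of delegation rule. -/
section AuxProof

private lemma key1 : ∀ a : Fin 5, Ga.deleg a → Ga.cast a → False := by
  simp only [Ga, DelGraph.Edge]; decide

private lemma kdeleg : ∀ a : Fin 5, Ga.deleg a → a = 0 ∨ a = 1 := by
  simp only [Ga]; decide

private lemma key2 : ∀ a b : Fin 5, Ga.deleg a → Ga.Edge a b → Ga.cast b →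
    (a = 0 ∧ b = 2) ∨ (a = 1 ∧ b = 3) := by
  simp only [Ga, DelGraph.Edge]; decide

private lemma key3 : ∀ a b d : Fin 5, Ga.deleg a → Ga.Edge a b → Ga.Edge b d → Ga.cast d →
    a = 0 ∧ b = 1 ∧ d = 3 := by
  simp only [Ga, DelGraph.Edge]; decide

private lemma no3 : ∀ a b d e : Fin 5, Ga.Edge a b → Ga.Edge b d → Ga.Edge d e → False := by
  simp only [Ga, DelGraph.Edge]; decide

private lemma e01 : Ga.Edge 0 1 := by simp only [Ga, DelGraph.Edge]; decide
private lemma e02 : Ga.Edge 0 2 := by simp only [Ga, DelGraph.Edge]; decide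
private lemma e13 : Ga.Edge 1 3 := by simp only [Ga, DelGraph.Edge]; decide

private lemma chain_cases {i : Fin 5} {c : List (Fin 5)} (h : Ga.IsChain i c) :
    (i = 0 ∧ c = [0, 2]) ∨ (i = 0 ∧ c = [0, 1, 3]) ∨ (i = 1 ∧ c = [1, 3]) := by
  obtain ⟨hh, hdel, hnd, hch, j, hl, hcast⟩ := h
  rcases c with _ | ⟨a, _ | ⟨b, _ | ⟨d, _ | ⟨e, t⟩⟩⟩⟩
  · simp at hh
  · simp only [List.head?_cons, Option.some.injEq] at hh
    simp only [List.getLast?_singleton, Option.some.injEq] at hl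
    subst hh; subst hl
    exact (key1 _ hdel hcast).elim
  · simp only [List.head?_cons, Option.some.injEq] at hh
    have hlb : j = b := by simpa using hl.symm
    subst hh; subst hlb
    obtain ⟨hab, -⟩ := List.isChain_cons_cons.mp hch
    rcases key2 _ _ hdel hab hcast with ⟨h1, h2⟩ | ⟨h1, h2⟩
    · exact Or.inl ⟨h1, by rw [h1, h2]⟩
    · exact Or.inr (Or.inr ⟨h1, by rw [h1, h2]⟩)
  · simp only [List.head?_cons, Option.some.injEq] at hh
    have hld : j = d := by simpa using hl.symm
    subst hh; subst hld
    obtain ⟨hab, hch2⟩ := List.isChain_cons_cons.mp hch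
    obtain ⟨hbd, -⟩ := List.isChain_cons_cons.mp hch2
    obtain ⟨h1, h2, h3⟩ := key3 _ _ _ hdel hab hbd hcast
    exact Or.inr (Or.inl ⟨h1, by rw [h1, h2, h3]⟩)
  · obtain ⟨hab, hch2⟩ := List.isChain_cons_cons.mp hch
    obtain ⟨hbd, hch3⟩ := List.isChain_cons_cons.mp hch2
    obtain ⟨hde, -⟩ := List.isChain_cons_cons.mp hch3
    exact (no3 _ _ _ _ hab hbd hde).elim

private lemma isChain_02 : Ga.IsChain 0 [0, 2] :=
  ⟨rfl, Or.inl rfl, by decide, List.isChain_cons_cons.mpr ⟨e02, List.isChain_singleton _⟩,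
    2, rfl, Or.inl rfl⟩

private lemma isChain_013 : Ga.IsChain 0 [0, 1, 3] :=
  ⟨rfl, Or.inl rfl, by decide,
    List.isChain_cons_cons.mpr ⟨e01, List.isChain_cons_cons.mpr ⟨e13, List.isChain_singleton _⟩⟩,
    3, rfl, Or.inr rfl⟩

private lemma isChain_13 : Ga.IsChain 1 [1, 3] :=
  ⟨rfl, Or.inr rfl, by decide, List.isChain_cons_cons.mpr ⟨e13, List.isChain_singleton _⟩,
    3, rfl, Or.inr rfl⟩

private lemma w02 : Ga.weights [0, 2] = [2] := by
  simp only [DelGraph.weights, Ga]; rfl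
private lemma w013 : Ga.weights [0, 1, 3] = [1, 2] := by
  simp only [DelGraph.weights, Ga]; rfl
private lemma w13 : Ga.weights [1, 3] = [2] := by
  simp only [DelGraph.weights, Ga]; rfl

private lemma lexA : DelGraph.LexLt [1, 2] [2] := by
  unfold DelGraph.LexLt; exact List.Lex.rel (by norm_num)
private lemma nlex1 : ¬ DelGraph.LexLt [2] [1, 2] := by
  unfold DelGraph.LexLt; decide
private lemma nlex2 : ¬ DelGraph.LexLt [1, 2] [1, 2] := by
  unfold DelGraph.LexLt; decide
private lemma nlex3 : ¬ DelGraph.LexLt [2] [2] := by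
  unfold DelGraph.LexLt; decide

private lemma df_cases {k : Fin 5} {c : List (Fin 5)} (h : Ga.DFSelect k c) :
    (k = 0 ∧ c = [0, 1, 3]) ∨ (k = 1 ∧ c = [1, 3]) := by
  obtain ⟨hc, hmin⟩ := h
  rcases chain_cases hc with ⟨rfl, rfl⟩ | ⟨rfl, rfl⟩ | ⟨rfl, rfl⟩
  · exact absurd (w013 ▸ w02 ▸ lexA) (hmin [0, 1, 3] isChain_013)
  · exact Or.inl ⟨rfl, rfl⟩
  · exact Or.inr ⟨rfl, rfl⟩

private lemma df_sel_013 : Ga.DFSelect 0 [0, 1, 3] := by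
  refine ⟨isChain_013, fun c' hc' => ?_⟩
  rcases chain_cases hc' with ⟨-, rfl⟩ | ⟨-, rfl⟩ | ⟨h, -⟩
  · rw [w02, w013]; exact nlex1
  · rw [w013]; exact nlex2
  · exact absurd h (by decide)

private lemma df_sel_13 : Ga.DFSelect 1 [1, 3] := by
  refine ⟨isChain_13, fun c' hc' => ?_⟩
  rcases chain_cases hc' with ⟨h, -⟩ | ⟨h, -⟩ | ⟨-, rfl⟩
  · exact absurd h (by decide)
  · exact absurd h (by decide)
  · rw [w13]; exact nlex3

private lemma bf_cases {k : Fin 5} {c : List (Fin 5)} (h : Ga.BFSelect k c) :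
    (k = 0 ∧ c = [0, 2]) ∨ (k = 1 ∧ c = [1, 3]) := by
  obtain ⟨hc, hmin⟩ := h
  rcases chain_cases hc with ⟨rfl, rfl⟩ | ⟨rfl, rfl⟩ | ⟨rfl, rfl⟩
  · exact Or.inl ⟨rfl, rfl⟩
  · exact absurd (Or.inl (by norm_num) : Ga.BFLt [0, 2] [0, 1, 3])
      (hmin [0, 2] isChain_02)
  · exact Or.inr ⟨rfl, rfl⟩

private lemma bf_sel_02 : Ga.BFSelect 0 [0, 2] := by
  refine ⟨isChain_02, fun c' hc' => ?_⟩
  rcases chain_cases hc' with ⟨-, rfl⟩ | ⟨-, rfl⟩ | ⟨h, -⟩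
  · rintro (h | ⟨-, h⟩)
    · exact absurd h (by norm_num)
    · exact nlex3 (w02 ▸ h)
  · rintro (h | ⟨h, -⟩) <;> norm_num at h
  · exact absurd h (by decide)

private lemma bf_sel_13 : Ga.BFSelect 1 [1, 3] := by
  refine ⟨isChain_13, fun c' hc' => ?_⟩
  rcases chain_cases hc' with ⟨h, -⟩ | ⟨h, -⟩ | ⟨-, rfl⟩
  · exact absurd h (by decide)
  · exact absurd h (by decide)
  · rintro (h | ⟨-, h⟩)
    · exact absurd h (by norm_num)
    · exact nlex3 (w13 ▸ h)

private lemma dfG3 : ∀ k : Fin 5, Ga.DFGuru k 3 ↔ (k = 0 ∨ k = 1) := by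
  intro k
  constructor
  · rintro ⟨c, hsel, -⟩
    rcases df_cases hsel with ⟨rfl, -⟩ | ⟨rfl, -⟩
    · exact Or.inl rfl
    · exact Or.inr rfl
  · rintro (rfl | rfl)
    · exact ⟨[0, 1, 3], df_sel_013, rfl⟩
    · exact ⟨[1, 3], df_sel_13, rfl⟩

private lemma dfG2 : ∀ k : Fin 5, ¬ Ga.DFGuru k 2 := by
  rintro k ⟨c, hsel, hlast⟩
  rcases df_cases hsel with ⟨-, rfl⟩ | ⟨-, rfl⟩ <;>
    exact absurd hlast (by decide)

private lemma bfG2 : ∀ k : Fin 5, Ga.BFGuru k 2 ↔ k = 0 := by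
  intro k
  constructor
  · rintro ⟨c, hsel, hlast⟩
    rcases bf_cases hsel with ⟨rfl, rfl⟩ | ⟨rfl, rfl⟩
    · rfl
    · exact absurd hlast (by decide)
  · rintro rfl; exact ⟨[0, 2], bf_sel_02, rfl⟩

private lemma bfG3 : ∀ k : Fin 5, Ga.BFGuru k 3 ↔ k = 1 := by
  intro k
  constructor
  · rintro ⟨c, hsel, hlast⟩
    rcases bf_cases hsel with ⟨rfl, rfl⟩ | ⟨rfl, rfl⟩
    · exact absurd hlast (by decide)
    · rfl
  · rintro rfl; exact ⟨[1, 3], bf_sel_13, rfl⟩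

private lemma card_two : Nat.card {k : Fin 5 // Ga.DFGuru k 3} = 2 := by
  rw [Nat.card_congr (Equiv.subtypeEquivRight dfG3), Nat.card_eq_fintype_card]
  decide

private lemma card_zero : Nat.card {k : Fin 5 // Ga.DFGuru k 2} = 0 := by
  have : IsEmpty {k : Fin 5 // Ga.DFGuru k 2} := ⟨fun x => dfG2 x.1 x.2⟩
  exact Nat.card_of_isEmpty

private lemma card_bf2 : Nat.card {k : Fin 5 // Ga.BFGuru k 2} = 1 := by
  rw [Nat.card_congr (Equiv.subtypeEquivRight bfG2), Nat.card_eq_fintype_card]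
  decide

private lemma card_bf3 : Nat.card {k : Fin 5 // Ga.BFGuru k 3} = 1 := by
  rw [Nat.card_congr (Equiv.subtypeEquivRight bfG3), Nat.card_eq_fintype_card]
  decide

private lemma cast3 : Ga.cast 3 := Or.inr rfl
private lemma cast2 : Ga.cast 2 := Or.inl rfl

end AuxProof

/-- there is a delegation graph (with voter `2` casting Yes and
voter `3` casting No) on which the depth-first and breadth-first delegation
rules assign different gurus to some delegating voter, and the plurality
outcomes differ: under depth-first, No strictly wins, while under
breadth-first it does not. -/
theorem stmt8 :
    ∃ G : DelGraph (Fin 5),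
      (∃ k l l' : Fin 5, G.DFGuru k l ∧ G.BFGuru k l' ∧ l ≠ l') ∧
      dfTally G 3 > dfTally G 2 ∧ ¬ (bfTally G 3 > bfTally G 2) := by
  refine ⟨Ga, ⟨0, 3, 2, (dfG3 0).mpr (Or.inl rfl), (bfG2 0).mpr rfl, by decide⟩, ?_, ?_⟩
  · unfold dfTally
    rw [if_pos cast3, if_pos cast2, card_two, card_zero]
    norm_num
  · unfold bfTally
    rw [if_pos cast3, if_pos cast2, card_bf2, card_bf3]
    norm_num
end

section
/- For the breadth-first delegation rule: if voter k's selected minimal chain is C_k = ⟨k, …, f, j, …, l⟩ passing through j, and j's selected minimal chain is C_j = ⟨j, …, e, g, …, i⟩ with i ≠ l, where e also occurs in the segment ⟨k, …, f⟩ of C_k, then the chain C'_k = ⟨k, …, e, g, …, i⟩ is a valid delegation chain for k that is strictly shorter than C_k, contradicting minimality; hence no such configuration exists. -/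
/-!
Cut `C_k` just after `e` and continue along `C_j` from `e`: the resulting walk from `k` to the
casting voter `i` has length `|⟨k,…,e⟩| + |⟨g,…,i⟩|`, while minimality of `C_j` against the
tail `⟨j,…,l⟩` of `C_k` gives `|⟨g,…,i⟩| < |⟨j,…,l⟩|`. Shortcutting repetitions turns the walk
into a delegation chain for `k` strictly shorter than `C_k`, which is impossible.
-/

theorem List.IsChain.exists_nodup {α : Type*} {R : α → α → Prop} {l : List α}
    (hl : l.IsChain R) : ∃ l' : List α, l'.Nodup ∧ l'.IsChain R ∧ l'.head? = l.head? ∧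
      l'.getLast? = l.getLast? ∧ l'.length ≤ l.length := by
  induction l with
  | nil => exact ⟨[], List.nodup_nil, List.isChain_nil, rfl, rfl, le_rfl⟩
  | cons x l ih =>
    obtain ⟨l', hnd, hch, hhead, hlast, hlen⟩ := ih hl.tail
    by_cases hx : x ∈ l'
    · -- shortcut the cycle from `x` back to `x`
      obtain ⟨s, t, rfl⟩ := List.append_of_mem hx
      refine ⟨x :: t, hnd.sublist (List.sublist_append_right s _), hch.right_of_append, rfl,
        ?_, ?_⟩
      · rw [List.getLast?_cons, List.getLast?_cons, ← hlast,
          List.getLast?_append_of_ne_nil s (List.cons_ne_nil x t), List.getLast?_cons,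
          Option.getD_some]
      · simp only [List.length_append, List.length_cons] at hlen ⊢
        omega
    · refine ⟨x :: l', List.nodup_cons.2 ⟨hx, hnd⟩,
        List.isChain_cons.2 ⟨hhead ▸ (List.isChain_cons.1 hl).1, hch⟩, rfl, ?_, ?_⟩
      · rw [List.getLast?_cons, List.getLast?_cons, hlast]
      · simpa using hlen

namespace DelGraph

variable {V : Type} {G : DelGraph V} {k j i : V} {c w K1 K2 : List V}

theorem BFSelect.length_le (hc : G.BFSelect k c) (hw : G.IsChain k w) :
    c.length ≤ w.length :=
  not_lt.1 fun h => hc.2 w hw (Or.inl h)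

theorem BFSelect.length_le_of_walk (hc : G.BFSelect k c) (hw : w.IsChain G.Edge)
    (hhead : w.head? = some k) (hlast : w.getLast? = some i) (hi : G.cast i) :
    c.length ≤ w.length := by
  obtain ⟨w', hnd, hch, hhead', hlast', hlen⟩ := hw.exists_nodup
  have hchain : G.IsChain k w' :=
    ⟨hhead'.trans hhead, hc.1.2.1, hnd, hch, i, hlast'.trans hlast, hi⟩
  exact (hc.length_le hchain).trans hlen

theorem IsChain.of_append_cons (hc : G.IsChain k (K1 ++ j :: K2)) (hj : G.deleg j) :
    G.IsChain j (j :: K2) := by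
  obtain ⟨-, -, hnd, hch, l, hl, hcast⟩ := hc
  refine ⟨rfl, hj, hnd.sublist (List.sublist_append_right K1 _), hch.right_of_append, l, ?_,
    hcast⟩
  rwa [List.getLast?_append_of_ne_nil K1 (List.cons_ne_nil j K2)] at hl

end DelGraph

theorem stmt10_general {V : Type} (G : DelGraph V) (k j e : V)
    (Ck Cj K1 K2 A B : List V)
    (hCk : G.BFSelect k Ck) (hCj : G.BFSelect j Cj)
    (hCkdec : Ck = K1 ++ j :: K2) (he : e ∈ K1)
    (hCjdec : Cj = A ++ B) (hAe : A.getLast? = some e) :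
    False := by
  subst hCkdec hCjdec
  obtain ⟨P1, P2, rfl⟩ := List.append_of_mem he
  obtain ⟨A', rfl⟩ := List.getLast?_eq_some_iff.1 hAe
  obtain ⟨hkhead, -, -, hkwalk : List.IsChain _ _, -⟩ := hCk.1
  obtain ⟨-, hjdeleg, -, hjwalk : List.IsChain _ _, i, hjlast, hi⟩ := hCj.1
  have hCj_le : (A' ++ [e] ++ B).length ≤ (j :: K2).length :=
    hCj.length_le (hCk.1.of_append_cons hjdeleg)
  have hwalk : (P1 ++ [e] ++ B).IsChain G.Edge := by
    have hk : (P1 ++ [e] ++ (P2 ++ j :: K2)).IsChain G.Edge := by simpa using hkwalk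
    have hj : (A' ++ ([e] ++ B)).IsChain G.Edge := by simpa using hjwalk
    exact hk.left_of_append.append_overlap hj.right_of_append (List.cons_ne_nil e [])
  have hwalk_head : (P1 ++ [e] ++ B).head? = some k := by simpa using hkhead
  have hwalk_last : (P1 ++ [e] ++ B).getLast? = some i := by
    simpa [List.getLast?_append] using hjlast
  have hCk_le := hCk.length_le_of_walk hwalk hwalk_head hwalk_last hi
  simp only [List.length_append, List.length_cons, List.length_nil] at hCj_le hCk_le
  omega

/-- for the breadth-first delegation rule, the following
configuration is impossible: `k`'s selected chain is
`Ck = ⟨k,…,f⟩ ++ j :: K2` ending at `l`, `j`'s selected chain is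
`Cj = A ++ B` with `A = ⟨j,…,e⟩`, `B = ⟨g,…,i⟩`, `i ≠ l`, and `e` also
occurring in the segment before `j` in `Ck` — otherwise
`⟨k,…,e,g,…,i⟩` would be a valid strictly shorter chain for `k`,
contradicting minimality. -/
theorem stmt10 {V : Type} (G : DelGraph V) (k j e l i : V)
    (Ck Cj K1 K2 A B : List V)
    (hCk : G.BFSelect k Ck) (hCj : G.BFSelect j Cj)
    (hCkdec : Ck = K1 ++ j :: K2) (he : e ∈ K1)
    (hCjdec : Cj = A ++ B) (hAe : A.getLast? = some e) (hB : B ≠ [])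
    (hCkl : Ck.getLast? = some l) (hCji : Cj.getLast? = some i)
    (hil : i ≠ l) :
    False :=
  stmt10_general G k j e Ck Cj K1 K2 A B hCk hCj hCkdec he hCjdec hAe
end
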